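/- arXiv:2206.00846 — 7 statements merged into one kernel-verified Lean document; each statement's English description precedes it below -/
import Mathlib

section
/- Let d ∈ ℕ, G ≥ 0 and R > 0. Let f : ℝ^d → ℝ be differentiable and convex, and let w₀ ∈ ℝ^d. Suppose that for every v ∈ ℝ^d with ‖v − w₀‖ = R one has ⟨∇f(v), v − w₀⟩ ≥ G. Then for every w ∈ ℝ^d with ‖w − w₀‖ > R, one has ‖∇f(w)‖ ≥ G/R. -/
/-!
On the ray `t ↦ w₀ + t • (w - w₀)` the convex function `f` restricts to a convex function of
one variable, whose derivative `⟪∇f(w₀ + t • (w - w₀)), w - w₀⟫` is therefore nondecreasing.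
Comparing the parameter `R / ‖w - w₀‖`, where the ray meets the sphere, with the parameter `1`
and applying Cauchy–Schwarz at `w` gives `G ≤ R * ‖∇f(w)‖`.
-/

open RealInnerProductSpace

theorem ConvexOn.comp_line {E : Type*} [AddCommGroup E] [Module ℝ E] {f : E → ℝ}
    (hconv : ConvexOn ℝ Set.univ f) (x u : E) :
    ConvexOn ℝ Set.univ (fun s : ℝ => f (x + s • u)) := by
  have hline : (fun s : ℝ => f (x + s • u)) = f ∘ AffineMap.lineMap x (x + u) := by
    funext s
    simp [AffineMap.lineMap_apply, add_comm]
  rw [hline]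
  simpa using hconv.comp_affineMap (AffineMap.lineMap x (x + u))

section LineRestriction

variable {E : Type*} [NormedAddCommGroup E] [InnerProductSpace ℝ E] [CompleteSpace E]
  {f : E → ℝ}

theorem hasDerivAt_comp_line_of_differentiableAt {x u : E} {t : ℝ}
    (hf : DifferentiableAt ℝ f (x + t • u)) :
    HasDerivAt (fun s : ℝ => f (x + s • u)) ⟪gradient f (x + t • u), u⟫ t := by
  have hline : HasDerivAt (fun s : ℝ => x + s • u) u t := by
    simpa using ((hasDerivAt_id t).smul_const u).const_add x
  simpa only [Function.comp_def, InnerProductSpace.toDual_apply_apply] using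
    (hasGradientAt_iff_hasFDerivAt.mp hf.hasGradientAt).comp_hasDerivAt t hline

theorem ConvexOn.monotone_inner_gradient_comp_line (hconv : ConvexOn ℝ Set.univ f)
    (hdiff : Differentiable ℝ f) (x u : E) :
    Monotone (fun t : ℝ => ⟪gradient f (x + t • u), u⟫) := by
  have hderiv : deriv (fun s : ℝ => f (x + s • u)) = fun t => ⟪gradient f (x + t • u), u⟫ :=
    funext fun t => (hasDerivAt_comp_line_of_differentiableAt (hdiff _)).deriv
  rw [← hderiv, ← monotoneOn_univ]
  exact (hconv.comp_line x u).monotoneOn_deriv fun t _ =>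
    (hasDerivAt_comp_line_of_differentiableAt (hdiff _)).differentiableAt

end LineRestriction

theorem stmt_0_general (d : ℕ) (G R : ℝ) (hR : 0 < R)
    (f : EuclideanSpace ℝ (Fin d) → ℝ)
    (hdiff : Differentiable ℝ f)
    (hconv : ConvexOn ℝ Set.univ f)
    (w₀ : EuclideanSpace ℝ (Fin d))
    (hsphere : ∀ v : EuclideanSpace ℝ (Fin d), ‖v - w₀‖ = R → G ≤ ⟪gradient f v, v - w₀⟫) :
    ∀ w : EuclideanSpace ℝ (Fin d), R < ‖w - w₀‖ → G / R ≤ ‖gradient f w‖ := by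
  intro w hw
  set u := w - w₀
  have hn : 0 < ‖u‖ := hR.trans hw
  -- `v` is the point where the segment from `w₀` to `w` crosses the sphere.
  set v := w₀ + (R / ‖u‖) • u
  have hv : ‖v - w₀‖ = R := by
    simp only [v, add_sub_cancel_left, norm_smul, Real.norm_eq_abs, abs_of_pos (div_pos hR hn)]
    field_simp
  have hsph : G ≤ R / ‖u‖ * ⟪gradient f v, u⟫ := by
    simpa [v, real_inner_smul_right] using hsphere v hv
  have hmono : ⟪gradient f v, u⟫ ≤ ⟪gradient f w, u⟫ := by
    simpa [u] using hconv.monotone_inner_gradient_comp_line hdiff w₀ u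
      ((div_le_one hn).mpr hw.le)
  have hcs : ⟪gradient f w, u⟫ ≤ ‖gradient f w‖ * ‖u‖ := real_inner_le_norm _ _
  rw [div_le_iff₀ hR]
  calc G ≤ R / ‖u‖ * ⟪gradient f v, u⟫ := hsph
    _ ≤ R / ‖u‖ * (‖gradient f w‖ * ‖u‖) := by gcongr; exact hmono.trans hcs
    _ = ‖gradient f w‖ * R := by field_simp

/-- If a differentiable convex function `f` has `⟪∇f(v), v - w₀⟫ ≥ G` on the sphere of radius
`R` around `w₀`, then `‖∇f(w)‖ ≥ G / R` for every `w` outside the corresponding ball. -/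
theorem stmt_0 (d : ℕ) (G R : ℝ) (hG : 0 ≤ G) (hR : 0 < R)
    (f : EuclideanSpace ℝ (Fin d) → ℝ)
    (hdiff : Differentiable ℝ f)
    (hconv : ConvexOn ℝ Set.univ f)
    (w₀ : EuclideanSpace ℝ (Fin d))
    (hsphere : ∀ v : EuclideanSpace ℝ (Fin d), ‖v - w₀‖ = R → G ≤ ⟪gradient f v, v - w₀⟫) :
    ∀ w : EuclideanSpace ℝ (Fin d), R < ‖w - w₀‖ → G / R ≤ ‖gradient f w‖ :=
  stmt_0_general d G R hR f hdiff hconv w₀ hsphere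
end

section
/- Let F : ℝ^d → ℝ be differentiable with L₁-Lipschitz gradient, where L₁ > 0. Let w, g ∈ ℝ^d and α, α̃, c > 0 satisfy: ‖g − ∇F(w)‖² ≤ α·α̃, α ≤ α̃, c ≤ α̃, and ‖g‖ > 2·α̃. Then with step size η = c/(L₁·‖g‖), one has F(w − η·g) ≤ F(w) − c·α̃/(4·L₁). -/
/-! The descent lemma `F (x + v) ≤ F x + ⟪∇F x, v⟫ + L/2 ‖v‖²` at `v = -η g`, combined with
`⟪∇F w, g⟫ ≥ ‖g‖² - α̃ ‖g‖` (Cauchy–Schwarz and `‖g - ∇F w‖ ≤ α̃`), shows that the step decreases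
`F` by at least `(c / L₁) (‖g‖ - α̃ - c / 2)`, and `‖g‖ > 2 α̃ ≥ α̃ + c` bounds this below by
`c α̃ / (4 L₁)`. -/

open InnerProductSpace Set

section Descent

variable {E : Type*} [NormedAddCommGroup E] [InnerProductSpace ℝ E] [CompleteSpace E]
  {F : E → ℝ}

theorem hasDerivAt_comp_add_smul_gradient (hF : Differentiable ℝ F) (x v : E) (t : ℝ) :
    HasDerivAt (fun s : ℝ => F (x + s • v)) ⟪gradient F (x + t • v), v⟫_ℝ t := by
  have hline : HasDerivAt (fun s : ℝ => x + s • v) v t := by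
    simpa using ((hasDerivAt_id t).smul_const v).const_add x
  rw [inner_gradient_left]
  exact (hF _).hasFDerivAt.comp_hasDerivAt t hline

theorem le_add_inner_gradient_add_of_lipschitzWith_gradient (hF : Differentiable ℝ F) {L : NNReal}
    (hL : LipschitzWith L (gradient F)) (x v : E) :
    F (x + v) ≤ F x + ⟪gradient F x, v⟫_ℝ + L / 2 * ‖v‖ ^ 2 := by
  set φ : ℝ → ℝ := fun t => F (x + t • v) - t * ⟪gradient F x, v⟫_ℝ - L / 2 * t ^ 2 * ‖v‖ ^ 2
  have hφ (t : ℝ) : HasDerivAt φ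
      (⟪gradient F (x + t • v) - gradient F x, v⟫_ℝ - L * t * ‖v‖ ^ 2) t := by
    refine (((hasDerivAt_comp_add_smul_gradient hF x v t).sub
      ((hasDerivAt_id t).mul_const ⟪gradient F x, v⟫_ℝ)).sub
      (((hasDerivAt_pow 2 t).const_mul (L / 2 : ℝ)).mul_const (‖v‖ ^ 2))).congr_deriv ?_
    rw [inner_sub_left, Nat.cast_ofNat, Nat.add_one_sub_one, pow_one]
    ring
  have hφ_nonpos : ∀ t ∈ interior (Icc (0 : ℝ) 1),
      ⟪gradient F (x + t • v) - gradient F x, v⟫_ℝ - L * t * ‖v‖ ^ 2 ≤ 0 := by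
    intro t ht
    rw [interior_Icc] at ht
    have hgrad : ‖gradient F (x + t • v) - gradient F x‖ ≤ L * (t * ‖v‖) := by
      simpa [norm_smul, abs_of_pos ht.1] using hL.norm_sub_le (x + t • v) x
    rw [sub_nonpos]
    calc ⟪gradient F (x + t • v) - gradient F x, v⟫_ℝ
        ≤ ‖gradient F (x + t • v) - gradient F x‖ * ‖v‖ := real_inner_le_norm _ _
      _ ≤ L * (t * ‖v‖) * ‖v‖ := by gcongr
      _ = L * t * ‖v‖ ^ 2 := by ring
  have hanti : AntitoneOn φ (Icc 0 1) :=
    antitoneOn_of_hasDerivWithinAt_nonpos (convex_Icc 0 1)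
      (fun t _ => (hφ t).continuousAt.continuousWithinAt)
      (fun t _ => (hφ t).hasDerivWithinAt) hφ_nonpos
  have := hanti (left_mem_Icc.2 zero_le_one) (right_mem_Icc.2 zero_le_one) zero_le_one
  simp only [φ, zero_smul, one_smul, add_zero, zero_mul, one_mul, sub_zero, one_pow,
    ne_eq, OfNat.ofNat_ne_zero, not_false_eq_true, zero_pow, mul_zero] at this
  linarith


theorem sq_norm_sub_mul_norm_le_inner_of_norm_sub_le {E : Type*} [NormedAddCommGroup E]
    [InnerProductSpace ℝ E] {y g : E} {a : ℝ} (h : ‖g - y‖ ≤ a) :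
    ‖g‖ ^ 2 - a * ‖g‖ ≤ ⟪y, g⟫_ℝ := by
  have hsplit : ⟪y, g⟫_ℝ = ‖g‖ ^ 2 - ⟪g - y, g⟫_ℝ := by
    rw [inner_sub_left, real_inner_self_eq_norm_sq]; ring
  have := (real_inner_le_norm (g - y) g).trans (mul_le_mul_of_nonneg_right h (norm_nonneg g))
  linarith

theorem le_sub_of_normalized_gradient_step (hF : Differentiable ℝ F) {L : NNReal}
    (hL : LipschitzWith L (gradient F)) (hL₀ : 0 < L) {x g : E} {a c : ℝ} (hc : 0 ≤ c)
    (hg : g ≠ 0) (herr : ‖g - gradient F x‖ ≤ a) :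
    F (x - (c / (L * ‖g‖)) • g) ≤ F x - (c * (‖g‖ - a) - c ^ 2 / 2) / L := by
  set η := c / (L * ‖g‖)
  have hη : 0 ≤ η := by positivity
  calc F (x - η • g) = F (x + -(η • g)) := by rw [sub_eq_add_neg]
    _ ≤ F x + ⟪gradient F x, -(η • g)⟫_ℝ + L / 2 * ‖-(η • g)‖ ^ 2 :=
      le_add_inner_gradient_add_of_lipschitzWith_gradient hF hL x _
    _ = F x - η * ⟪gradient F x, g⟫_ℝ + L / 2 * (η * ‖g‖) ^ 2 := by
      rw [inner_neg_right, real_inner_smul_right, norm_neg, norm_smul, Real.norm_of_nonneg hη]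
      ring
    _ ≤ F x - η * (‖g‖ ^ 2 - a * ‖g‖) + L / 2 * (η * ‖g‖) ^ 2 := by
      gcongr
      exact sq_norm_sub_mul_norm_le_inner_of_norm_sub_le herr
    _ = F x - (c * (‖g‖ - a) - c ^ 2 / 2) / L := by
      have : ‖g‖ ≠ 0 := norm_ne_zero_iff.2 hg
      simp only [η]
      field_simp
      ring

end Descent

theorem stmt_8_general (d : ℕ) (F : EuclideanSpace ℝ (Fin d) → ℝ)
    (hdiff : Differentiable ℝ F)
    (L₁ : ℝ) (hL₁ : 0 < L₁) (hlip : LipschitzWith L₁.toNNReal (gradient F))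
    (w g : EuclideanSpace ℝ (Fin d)) (α αt c : ℝ)
    (hc : 0 < c)
    (herr : ‖g - gradient F w‖ ^ 2 ≤ α * αt)
    (hααt : α ≤ αt) (hcαt : c ≤ αt) (hg : 2 * αt < ‖g‖) :
    F (w - (c / (L₁ * ‖g‖)) • g) ≤ F w - c * αt / (4 * L₁) := by
  have hαt : 0 < αt := hc.trans_le hcαt
  have herr' : ‖g - gradient F w‖ ≤ αt :=
    le_of_pow_le_pow_left₀ two_ne_zero hαt.le (herr.trans (by nlinarith))
  have hstep := le_sub_of_normalized_gradient_step hdiff hlip (Real.toNNReal_pos.2 hL₁) hc.le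
    (norm_pos_iff.1 (by linarith)) herr'
  rw [Real.coe_toNNReal _ hL₁.le] at hstep
  calc _ ≤ _ := hstep
    _ ≤ F w - c * αt / 4 / L₁ := by gcongr; nlinarith
    _ = F w - c * αt / (4 * L₁) := by ring

/-- SPIDER-style descent step: if `‖g - ∇F(w)‖² ≤ α·α̃`, `α ≤ α̃`, `c ≤ α̃` and `‖g‖ > 2α̃`,
then the normalized step `η = c/(L₁‖g‖)` decreases `F` by at least `c·α̃/(4L₁)`. -/
theorem stmt_8 (d : ℕ) (F : EuclideanSpace ℝ (Fin d) → ℝ)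
    (hdiff : Differentiable ℝ F)
    (L₁ : ℝ) (hL₁ : 0 < L₁) (hlip : LipschitzWith L₁.toNNReal (gradient F))
    (w g : EuclideanSpace ℝ (Fin d)) (α αt c : ℝ)
    (hα : 0 < α) (hαt : 0 < αt) (hc : 0 < c)
    (herr : ‖g - gradient F w‖ ^ 2 ≤ α * αt)
    (hααt : α ≤ αt) (hcαt : c ≤ αt) (hg : 2 * αt < ‖g‖) :
    F (w - (c / (L₁ * ‖g‖)) • g) ≤ F w - c * αt / (4 * L₁) :=
  stmt_8_general d F hdiff L₁ hL₁ hlip w g α αt c hc herr hααt hcαt hg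
end

section
/- Let 0 < λ ≤ β, let f : ℝ^d → ℝ be differentiable, λ-strongly convex, and have β-Lipschitz gradient, and let 0 < η ≤ 1/β. Then for all w, v ∈ ℝ^d, ‖(w − η·∇f(w)) − (v − η·∇f(v))‖ ≤ (1 − η·λ)·‖w − v‖; that is, the gradient-descent step with step size η is a (1 − ηλ)-contraction. -/
/-!
Write `f = h + (λ/2)‖·‖²` with `h` convex. The descent lemma makes `h` `(β - λ)`-smooth, and a
convex `M`-smooth function has `M⁻¹`-cocoercive gradient: `‖∇h y - ∇h x‖² ≤ M ⟪∇h y - ∇h x, y - x⟫`.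
The gradient step is `(1 - ηλ) • id - η • ∇h`, and expanding the square, cocoercivity together
with `η (β - λ) ≤ 2 (1 - ηλ)` absorbs the cross term.
-/

open Set Filter Topology InnerProductSpace RealInnerProductSpace
open scoped Gradient

variable {E : Type*} [NormedAddCommGroup E] [InnerProductSpace ℝ E]

theorem norm_smul_sub_smul_le_of_sq_le_mul_inner {u g : E} {M c η : ℝ}
    (hg : ‖g‖ ^ 2 ≤ M * ⟪g, u⟫) (hM : 0 ≤ M) (hc : 0 ≤ c) (hη : 0 ≤ η) (hηM : η * M ≤ 2 * c) :
    ‖c • u - η • g‖ ≤ c * ‖u‖ := by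
  have hinner : η * ‖g‖ ^ 2 ≤ 2 * c * ⟪g, u⟫ := by
    rcases hM.eq_or_lt with rfl | hM
    · have : ‖g‖ = 0 := by nlinarith [norm_nonneg g]
      simp [norm_eq_zero.1 this]
    · have : 0 ≤ ⟪g, u⟫ := by nlinarith [sq_nonneg ‖g‖]
      nlinarith
  refine (sq_le_sq₀ (norm_nonneg _) (by positivity)).1 ?_
  rw [norm_sub_sq_real, norm_smul, norm_smul, real_inner_smul_left, real_inner_smul_right,
    real_inner_comm, Real.norm_of_nonneg hc, Real.norm_of_nonneg hη]
  nlinarith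

variable [CompleteSpace E] {f : E → ℝ}

theorem hasDerivAt_comp_add_smul {x u : E} {t : ℝ} (hf : DifferentiableAt ℝ f (x + t • u)) :
    HasDerivAt (fun s : ℝ => f (x + s • u)) ⟪∇ f (x + t • u), u⟫ t := by
  have hline : HasDerivAt (fun s : ℝ => x + s • u) u t := by
    simpa using ((hasDerivAt_id t).smul_const u).const_add x
  rw [inner_gradient_left]
  exact hf.hasFDerivAt.comp_hasDerivAt t hline

theorem ConvexOn.add_inner_gradient_le (hf : ConvexOn ℝ univ f) {x : E}
    (hx : DifferentiableAt ℝ f x) (y : E) : f x + ⟪∇ f x, y - x⟫ ≤ f y := by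
  have hline : ConvexOn ℝ univ (fun t : ℝ => f (x + t • (y - x))) := by
    simpa [Function.comp_def, AffineMap.lineMap_apply_module', add_comm] using
      hf.comp_affineMap (AffineMap.lineMap x y)
  have hderiv := hasDerivAt_comp_add_smul (t := 0) (u := y - x) (by simpa using hx)
  simp only [zero_smul, add_zero] at hderiv
  have := hline.le_slope_of_hasDerivAt (mem_univ 0) (mem_univ 1) one_pos hderiv
  simp only [slope_def_field, one_smul, zero_smul, add_zero, sub_zero, div_one,
    add_sub_cancel] at this
  linarith

theorem LipschitzWith.le_add_inner_gradient_add_sq {C : NNReal} (hlip : LipschitzWith C (∇ f))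
    (hf : Differentiable ℝ f) (x y : E) :
    f y ≤ f x + ⟪∇ f x, y - x⟫ + C / 2 * ‖y - x‖ ^ 2 := by
  set u := y - x
  let φ : ℝ → ℝ := fun t => f (x + t • u) - t * ⟪∇ f x, u⟫ - C / 2 * t ^ 2 * ‖u‖ ^ 2
  have hφ : ∀ t, HasDerivAt φ (⟪∇ f (x + t • u), u⟫ - ⟪∇ f x, u⟫ - C * t * ‖u‖ ^ 2) t := by
    intro t
    refine (((hasDerivAt_comp_add_smul (x := x) (u := u) (hf _)).sub
      ((hasDerivAt_id t).mul_const ⟪∇ f x, u⟫)).sub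
      (((hasDerivAt_pow 2 t).const_mul (C / 2 : ℝ)).mul_const (‖u‖ ^ 2))).congr_deriv ?_
    simp only [one_mul, Nat.cast_ofNat, Nat.add_one_sub_one, pow_one]
    ring
  have hanti : AntitoneOn φ (Ici 0) := by
    refine antitoneOn_of_hasDerivWithinAt_nonpos (convex_Ici 0)
      (fun t _ => (hφ t).continuousAt.continuousWithinAt) (fun t _ => (hφ t).hasDerivWithinAt) ?_
    intro t ht
    rw [interior_Ici, mem_Ioi] at ht
    have hgrad : ‖∇ f (x + t • u) - ∇ f x‖ ≤ C * (t * ‖u‖) := by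
      simpa [dist_eq_norm, norm_smul, abs_of_pos ht] using hlip.dist_le_mul (x + t • u) x
    have := real_inner_le_norm (∇ f (x + t • u) - ∇ f x) u
    rw [inner_sub_left] at this
    nlinarith [norm_nonneg u]
  have := hanti (mem_Ici.2 le_rfl) (mem_Ici.2 zero_le_one) zero_le_one
  simp only [φ, one_smul, zero_smul, add_zero, one_mul, zero_mul, one_pow, ne_eq,
    OfNat.ofNat_ne_zero, not_false_eq_true, zero_pow, mul_zero, sub_zero, add_sub_cancel, u] at this
  linarith

theorem HasGradientAt.sub_half_mul_norm_sq {f' x : E} (hf : HasGradientAt f f' x) (m : ℝ) :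
    HasGradientAt (fun w => f w - m / 2 * ‖w‖ ^ 2) (f' - m • x) x := by
  rw [hasGradientAt_iff_hasFDerivAt, map_sub] at *
  refine (hf.sub ((hasStrictFDerivAt_norm_sq x).hasFDerivAt.const_mul (m / 2))).congr_fderiv ?_
  ext v
  simp only [sub_apply, toDual_apply_apply, smul_apply,
    coe_innerSL_apply, nsmul_eq_mul, Nat.cast_ofNat, smul_eq_mul, map_smul, sub_right_inj]
  ring

theorem sub_half_mul_norm_sq_le_add_inner_gradient_add_sq {m C : ℝ} {x y : E}
    (hx : DifferentiableAt ℝ f x) (hf : f y ≤ f x + ⟪∇ f x, y - x⟫ + C / 2 * ‖y - x‖ ^ 2) :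
    f y - m / 2 * ‖y‖ ^ 2 ≤ f x - m / 2 * ‖x‖ ^ 2
      + ⟪∇ (fun w => f w - m / 2 * ‖w‖ ^ 2) x, y - x⟫ + (C - m) / 2 * ‖y - x‖ ^ 2 := by
  rw [(hx.hasGradientAt.sub_half_mul_norm_sq m).gradient, inner_sub_left, real_inner_smul_left]
  have : ‖y‖ ^ 2 = ‖x‖ ^ 2 + 2 * ⟪x, y - x⟫ + ‖y - x‖ ^ 2 := by
    simpa using norm_add_sq_real x (y - x)
  linear_combination hf - m / 2 * this

theorem ConvexOn.add_inner_gradient_add_sq_div_le (hconv : ConvexOn ℝ univ f) {M : ℝ}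
    (hM : 0 < M) (hf : ∀ x y, f y ≤ f x + ⟪∇ f x, y - x⟫ + M / 2 * ‖y - x‖ ^ 2) {x : E}
    (hx : DifferentiableAt ℝ f x) (y : E) :
    f x + ⟪∇ f x, y - x⟫ + ‖∇ f y - ∇ f x‖ ^ 2 / (2 * M) ≤ f y := by
  set g := ∇ f y - ∇ f x
  -- `y - M⁻¹ • g` minimises the gap between the quadratic upper bound at `y` and the tangent
  -- plane at `x`
  have hlow := hconv.add_inner_gradient_le hx (y - M⁻¹ • g)
  have hup := hf y (y - M⁻¹ • g)
  rw [sub_sub_cancel_left, inner_neg_right, norm_neg, real_inner_smul_right, norm_smul,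
    Real.norm_of_nonneg (inv_nonneg.2 hM.le)] at hup
  rw [sub_right_comm, inner_sub_right, real_inner_smul_right] at hlow
  have hg : ⟪∇ f y, g⟫ - ⟪∇ f x, g⟫ = ‖g‖ ^ 2 := by
    rw [← inner_sub_left, real_inner_self_eq_norm_sq]
  have hsq : M / 2 * (M⁻¹ * ‖g‖) ^ 2 = ‖g‖ ^ 2 / (2 * M) := by
    field_simp
  have hlin : M⁻¹ * ⟪∇ f y, g⟫ - M⁻¹ * ⟪∇ f x, g⟫ = 2 * (‖g‖ ^ 2 / (2 * M)) := by
    rw [← mul_sub, hg]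
    field_simp
  linarith

theorem ConvexOn.sq_norm_sub_gradient_le_mul_inner (hconv : ConvexOn ℝ univ f)
    (hd : Differentiable ℝ f) {M : ℝ} (hM : 0 ≤ M) (hf : ∀ x y, f y ≤ f x + ⟪∇ f x, y - x⟫ + M / 2 * ‖y - x‖ ^ 2)
    (x y : E) : ‖∇ f y - ∇ f x‖ ^ 2 ≤ M * ⟪∇ f y - ∇ f x, y - x⟫ := by
  -- `M = 0` is allowed, so prove the bound for every `M + ε` and let `ε → 0`
  have hpos : ∀ ε > 0, ‖∇ f y - ∇ f x‖ ^ 2 ≤ (M + ε) * ⟪∇ f y - ∇ f x, y - x⟫ := by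
    intro ε hε
    have hMε : 0 < M + ε := by positivity
    have hf' : ∀ x y, f y ≤ f x + ⟪∇ f x, y - x⟫ + (M + ε) / 2 * ‖y - x‖ ^ 2 := fun x y => by
      nlinarith [hf x y, sq_nonneg ‖y - x‖]
    have hxy := hconv.add_inner_gradient_add_sq_div_le hMε hf' (hd x) y
    have hyx := hconv.add_inner_gradient_add_sq_div_le hMε hf' (hd y) x
    rw [norm_sub_rev, ← neg_sub y x, inner_neg_right] at hyx
    rw [← div_le_iff₀' hMε, inner_sub_left]
    have : ‖∇ f y - ∇ f x‖ ^ 2 / (M + ε) = 2 * (‖∇ f y - ∇ f x‖ ^ 2 / (2 * (M + ε))) := by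
      field_simp
    linarith
  have hlim : Tendsto (fun ε => (M + ε) * ⟪∇ f y - ∇ f x, y - x⟫) (𝓝[>] 0)
      (𝓝 (M * ⟪∇ f y - ∇ f x, y - x⟫)) := by
    have := ((tendsto_const_nhds (x := M)).add (tendsto_id (x := 𝓝 (0 : ℝ)))).mul_const
      ⟪∇ f y - ∇ f x, y - x⟫
    simpa using this.mono_left nhdsWithin_le_nhds
  exact ge_of_tendsto hlim (eventually_nhdsWithin_of_forall hpos)

theorem stmt_9_general (d : ℕ) (lam β : ℝ) (hlamβ : lam ≤ β)
    (f : EuclideanSpace ℝ (Fin d) → ℝ)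
    (hdiff : Differentiable ℝ f)
    (hsc : ConvexOn ℝ Set.univ (fun w => f w - lam / 2 * ‖w‖ ^ 2))
    (hlip : LipschitzWith β.toNNReal (gradient f))
    (η : ℝ) (hη0 : 0 < η) (hη : η ≤ 1 / β) :
    ∀ w v : EuclideanSpace ℝ (Fin d),
      ‖(w - η • gradient f w) - (v - η • gradient f v)‖ ≤ (1 - η * lam) * ‖w - v‖ := by
  intro w v
  have hβ : 0 < β := by
    by_contra! hβ
    linarith [one_div_nonpos.2 hβ]
  have hηβ : η * β ≤ 1 := by rwa [le_div_iff₀ hβ] at hη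
  set h := fun w => f w - lam / 2 * ‖w‖ ^ 2
  have hgrad : ∀ x, HasGradientAt h (∇ f x - lam • x) x :=
    fun x => (hdiff x).hasGradientAt.sub_half_mul_norm_sq lam
  have hdesc : ∀ x y, h y ≤ h x + ⟪∇ h x, y - x⟫ + (β - lam) / 2 * ‖y - x‖ ^ 2 := fun x y =>
    sub_half_mul_norm_sq_le_add_inner_gradient_add_sq (hdiff x) (by
      simpa [Real.coe_toNNReal _ hβ.le] using hlip.le_add_inner_gradient_add_sq hdiff x y)
  have hcoco := hsc.sq_norm_sub_gradient_le_mul_inner (fun x => (hgrad x).differentiableAt)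
    (sub_nonneg.2 hlamβ) hdesc v w
  have hstep : w - η • ∇ f w - (v - η • ∇ f v) = (1 - η * lam) • (w - v) - η • (∇ h w - ∇ h v) := by
    rw [(hgrad w).gradient, (hgrad v).gradient]
    module
  rw [hstep]
  have hcontr : 0 ≤ 1 - η * lam := by nlinarith
  have hstepsize : η * (β - lam) ≤ 2 * (1 - η * lam) := by nlinarith
  exact norm_smul_sub_smul_le_of_sq_le_mul_inner hcoco (sub_nonneg.2 hlamβ) hcontr hη0.le
    hstepsize

/-- A gradient-descent step with step size `0 < η ≤ 1/β` on a `λ`-strongly convex, `β`-smooth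
function is a `(1 - ηλ)`-contraction. -/
theorem stmt_9 (d : ℕ) (lam β : ℝ) (hlam : 0 < lam) (hlamβ : lam ≤ β)
    (f : EuclideanSpace ℝ (Fin d) → ℝ)
    (hdiff : Differentiable ℝ f)
    (hsc : ConvexOn ℝ Set.univ (fun w => f w - lam / 2 * ‖w‖ ^ 2))
    (hlip : LipschitzWith β.toNNReal (gradient f))
    (η : ℝ) (hη0 : 0 < η) (hη : η ≤ 1 / β) :
    ∀ w v : EuclideanSpace ℝ (Fin d),
      ‖(w - η • gradient f w) - (v - η • gradient f v)‖ ≤ (1 - η * lam) * ‖w - v‖ :=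
  stmt_9_general d lam β hlamβ f hdiff hsc hlip η hη0 hη
end

section
/- Let x₁, ..., x_n ∈ ℝ^d, let φ₁, ..., φ_n : ℝ → ℝ be differentiable, let Φ : ℝ^d → ℝ^k be a linear map, and let τ ∈ [0, 1) be such that ‖Φ v‖ ≥ (1 − τ)·‖v‖ for every v in the linear span of {x₁, ..., x_n}. Let F be the GLM empirical risk and F̃ the embedded empirical risk. Then for every u ∈ ℝ^k, ∇F̃(u) = Φ(∇F(Φᵀ u)) and consequently ‖∇F̃(u)‖ ≥ (1 − τ)·‖∇F(Φᵀ u)‖. -/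
open RealInnerProductSpace

/-!
Since `⟪u, Φ xᵢ⟫ = ⟪Φᵀ u, xᵢ⟫`, the embedded risk is `F̃ = F ∘ Φᵀ`, so the chain rule gives
`∇F̃(u) = Φ (∇F(Φᵀ u))`. The gradient of a GLM risk is a combination of the data points, hence
`∇F(Φᵀ u)` lies in their span, where `Φ` shrinks norms by at most the factor `1 - τ`.
-/

section Gradient

variable {E F : Type*} [NormedAddCommGroup E] [InnerProductSpace ℝ E] [CompleteSpace E]
  [NormedAddCommGroup F] [InnerProductSpace ℝ F] [CompleteSpace F]

theorem HasGradientAt.fun_sum {ι : Type*} {s : Finset ι} {f : ι → E → ℝ} {f' : ι → E} {x : E}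
    (h : ∀ i ∈ s, HasGradientAt (f i) (f' i) x) :
    HasGradientAt (fun y => ∑ i ∈ s, f i y) (∑ i ∈ s, f' i) x := by
  rw [hasGradientAt_iff_hasFDerivAt, map_sum]
  exact HasFDerivAt.fun_sum fun i hi => hasGradientAt_iff_hasFDerivAt.mp (h i hi)

theorem HasGradientAt.const_mul {f : E → ℝ} {f' x : E} (h : HasGradientAt f f' x) (c : ℝ) :
    HasGradientAt (fun y => c * f y) (c • f') x := by
  rw [hasGradientAt_iff_hasFDerivAt] at h ⊢
  refine (h.const_mul c).congr_fderiv ?_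
  ext v
  simp [InnerProductSpace.toDual_apply_apply]

theorem HasDerivAt.hasGradientAt_comp_inner {φ : ℝ → ℝ} {φ' : ℝ} {a w : E}
    (h : HasDerivAt φ φ' ⟪w, a⟫) : HasGradientAt (fun y => φ ⟪y, a⟫) (φ' • a) w := by
  rw [hasGradientAt_iff_hasFDerivAt]
  have hinner := (hasFDerivAt_id w).inner ℝ (hasFDerivAt_const a w)
  refine (h.comp_hasFDerivAt w hinner).congr_fderiv ?_
  ext v
  simp [InnerProductSpace.toDual_apply_apply, real_inner_comm]

theorem HasGradientAt.comp_adjoint {f : E → ℝ} {f' : E} (A : E →L[ℝ] F) {u : F}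
    (h : HasGradientAt f f' (A.adjoint u)) :
    HasGradientAt (f ∘ A.adjoint) (A f') u := by
  rw [hasGradientAt_iff_hasFDerivAt] at h ⊢
  refine (h.comp u A.adjoint.hasFDerivAt).congr_fderiv ?_
  ext v
  simp [InnerProductSpace.toDual_apply_apply, ContinuousLinearMap.adjoint_inner_right]

end Gradient

section GLM

variable {E : Type*} [NormedAddCommGroup E] [InnerProductSpace ℝ E] {ι : Type*} [Fintype ι]

theorem hasGradientAt_glmRisk [CompleteSpace E] (c : ℝ) (a : ι → E) {φ : ι → ℝ → ℝ} {w : E}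
    (hφ : ∀ i, DifferentiableAt ℝ (φ i) ⟪w, a i⟫) :
    HasGradientAt (fun y => c * ∑ i, φ i ⟪y, a i⟫) (c • ∑ i, deriv (φ i) ⟪w, a i⟫ • a i) w :=
  (HasGradientAt.fun_sum fun i _ => (hφ i).hasDerivAt.hasGradientAt_comp_inner).const_mul c

theorem glmGradient_mem_span (c : ℝ) (a : ι → E) (φ : ι → ℝ → ℝ) (w : E) :
    c • ∑ i, deriv (φ i) ⟪w, a i⟫ • a i ∈ Submodule.span ℝ (Set.range a) :=
  Submodule.smul_mem _ _ <| Submodule.sum_mem _ fun i _ =>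
    Submodule.smul_mem _ _ <| Submodule.subset_span ⟨i, rfl⟩

end GLM

theorem stmt_11_general (d k n : ℕ)
    (x : Fin n → EuclideanSpace ℝ (Fin d))
    (φ : Fin n → ℝ → ℝ) (hφ : ∀ i, Differentiable ℝ (φ i))
    (Φ : EuclideanSpace ℝ (Fin d) →L[ℝ] EuclideanSpace ℝ (Fin k))
    (τ : ℝ)
    (hemb : ∀ v ∈ Submodule.span ℝ (Set.range x), (1 - τ) * ‖v‖ ≤ ‖Φ v‖)
    (F : EuclideanSpace ℝ (Fin d) → ℝ)
    (hF : ∀ w, F w = (1 / (n : ℝ)) * ∑ i, φ i ⟪w, x i⟫)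
    (Ft : EuclideanSpace ℝ (Fin k) → ℝ)
    (hFt : ∀ u, Ft u = (1 / (n : ℝ)) * ∑ i, φ i ⟪u, Φ (x i)⟫) :
    ∀ u : EuclideanSpace ℝ (Fin k),
      gradient Ft u = Φ (gradient F ((ContinuousLinearMap.adjoint Φ) u)) ∧
      (1 - τ) * ‖gradient F ((ContinuousLinearMap.adjoint Φ) u)‖ ≤ ‖gradient Ft u‖ := by
  intro u
  have hFt_eq : Ft = F ∘ Φ.adjoint := funext fun u => by
    simp only [hFt, Function.comp_apply, hF, ContinuousLinearMap.adjoint_inner_left]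
  have hgradF := hasGradientAt_glmRisk (1 / (n : ℝ)) x (w := Φ.adjoint u) fun i => hφ i _
  rw [← funext hF] at hgradF
  have hgrad : gradient Ft u = Φ (gradient F (Φ.adjoint u)) := by
    rw [hFt_eq, hgradF.gradient]
    exact (hgradF.comp_adjoint Φ).gradient
  refine ⟨hgrad, hgrad ▸ hemb _ ?_⟩
  rw [hgradF.gradient]
  exact glmGradient_mem_span _ x φ _

/-- If the linear map `Φ` does not shrink vectors in the span of the data by more than a factor
`1 - τ`, then the gradient of the embedded GLM risk at `u` equals `Φ(∇F(Φᵀu))` and its norm is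
at least `(1 - τ)‖∇F(Φᵀu)‖`. -/
theorem stmt_11 (d k n : ℕ) (hn : 0 < n)
    (x : Fin n → EuclideanSpace ℝ (Fin d))
    (φ : Fin n → ℝ → ℝ) (hφ : ∀ i, Differentiable ℝ (φ i))
    (Φ : EuclideanSpace ℝ (Fin d) →L[ℝ] EuclideanSpace ℝ (Fin k))
    (τ : ℝ) (hτ0 : 0 ≤ τ) (hτ1 : τ < 1)
    (hemb : ∀ v ∈ Submodule.span ℝ (Set.range x), (1 - τ) * ‖v‖ ≤ ‖Φ v‖)
    (F : EuclideanSpace ℝ (Fin d) → ℝ)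
    (hF : ∀ w, F w = (1 / (n : ℝ)) * ∑ i, φ i ⟪w, x i⟫)
    (Ft : EuclideanSpace ℝ (Fin k) → ℝ)
    (hFt : ∀ u, Ft u = (1 / (n : ℝ)) * ∑ i, φ i ⟪u, Φ (x i)⟫) :
    ∀ u : EuclideanSpace ℝ (Fin k),
      gradient Ft u = Φ (gradient F ((ContinuousLinearMap.adjoint Φ) u)) ∧
      (1 - τ) * ‖gradient F ((ContinuousLinearMap.adjoint Φ) u)‖ ≤ ‖gradient Ft u‖ :=
  stmt_11_general d k n x φ hφ Φ τ hemb F hF Ft hFt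
end

section
/- Let x₁, ..., x_n ∈ ℝ^d with ‖x_i‖ ≤ X for all i, let φ₁, ..., φ_n : ℝ → ℝ be differentiable with |φ_i'(z)| ≤ L₀ for all z ∈ ℝ and all i, let Φ : ℝ^d → ℝ^k be a linear map, and let E : ℝ^k → ℝ^d be a linear isometry. Let F be the GLM empirical risk and F̃ the embedded empirical risk. Then for every u ∈ ℝ^k, ‖∇F(Φᵀ u)‖ ≤ ‖∇F̃(u)‖ + L₀ · X · ‖id_{ℝ^d} − E ∘ Φ‖, where ‖id_{ℝ^d} − E ∘ Φ‖ is the operator norm. -/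
/-!
Since `⟪Φᵀu, xᵢ⟫ = ⟪u, Φ xᵢ⟫`, the embedded risk is `F̃ = F ∘ Φᵀ`, so the chain rule gives
`∇F̃(u) = Φ ∇F(Φᵀu)`. Writing `g = ∇F(Φᵀu)` as `E (Φ g) + (id - E ∘ Φ) g` and using that `E` is an
isometry yields `‖g‖ ≤ ‖∇F̃(u)‖ + ‖id - E ∘ Φ‖ ‖g‖`, and `‖g‖ ≤ L₀ X` because `g` is an average of
the vectors `φᵢ'(⟪Φᵀu, xᵢ⟫) xᵢ`.
-/

open RealInnerProductSpace

section Gradient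

variable {E G : Type*} [NormedAddCommGroup E] [InnerProductSpace ℝ E] [CompleteSpace E]
  [NormedAddCommGroup G] [InnerProductSpace ℝ G] [CompleteSpace G]

theorem HasGradientAt.comp_continuousLinearMap {f : G → ℝ} {g : G} {u : E} (A : E →L[ℝ] G)
    (hf : HasGradientAt f g (A u)) :
    HasGradientAt (f ∘ A) (ContinuousLinearMap.adjoint A g) u := by
  rw [hasGradientAt_iff_hasFDerivAt] at hf ⊢
  refine (hf.comp u A.hasFDerivAt).congr_fderiv ?_
  ext v
  simp only [ContinuousLinearMap.comp_apply, InnerProductSpace.toDual_apply_apply,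
    ContinuousLinearMap.adjoint_inner_left]

theorem hasGradientAt_smul_sum_comp_inner {ι : Type*} [Fintype ι] (a : ℝ) (x : ι → E)
    {φ : ι → ℝ → ℝ} {w : E} (hφ : ∀ i, DifferentiableAt ℝ (φ i) ⟪w, x i⟫) :
    HasGradientAt (fun w => a * ∑ i, φ i ⟪w, x i⟫)
      (a • ∑ i, deriv (φ i) ⟪w, x i⟫ • x i) w := by
  have hterm : ∀ i, HasFDerivAt (fun w : E => φ i ⟪w, x i⟫)
      (deriv (φ i) ⟪w, x i⟫ • innerSL ℝ (x i)) w := fun i => by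
    have hinner : HasFDerivAt (fun w : E => ⟪w, x i⟫) (innerSL ℝ (x i)) w := by
      rw [show (fun w : E => ⟪w, x i⟫) = innerSL ℝ (x i) from funext fun v => real_inner_comm _ _]
      exact (innerSL ℝ (x i)).hasFDerivAt
    exact (hφ i).hasDerivAt.comp_hasFDerivAt w hinner
  rw [hasGradientAt_iff_hasFDerivAt]
  refine ((HasFDerivAt.fun_sum fun i _ => hterm i).const_mul a).congr_fderiv ?_
  ext v
  simp only [smul_apply, sum_apply, coe_innerSL_apply, smul_eq_mul, map_smul, map_sum,
    InnerProductSpace.toDual_apply_apply]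

end Gradient

theorem norm_one_div_smul_sum_smul_le {E : Type*} [SeminormedAddCommGroup E] [NormedSpace ℝ E]
    {n : ℕ} (hn : 0 < n) {c : Fin n → ℝ} {v : Fin n → E} {L V : ℝ}
    (hc : ∀ i, |c i| ≤ L) (hv : ∀ i, ‖v i‖ ≤ V) :
    ‖(1 / (n : ℝ)) • ∑ i, c i • v i‖ ≤ L * V := by
  have hterm : ∀ i, ‖c i • v i‖ ≤ L * V := fun i => by
    rw [norm_smul, Real.norm_eq_abs]
    exact mul_le_mul (hc i) (hv i) (norm_nonneg _) ((abs_nonneg _).trans (hc i))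
  have hn' : (0 : ℝ) < n := Nat.cast_pos.mpr hn
  calc ‖(1 / (n : ℝ)) • ∑ i, c i • v i‖ = (1 / n) * ‖∑ i, c i • v i‖ := by
        rw [norm_smul, Real.norm_of_nonneg (by positivity)]
    _ ≤ (1 / n) * (n * (L * V)) := by
        gcongr
        simpa using norm_sum_le_of_le Finset.univ fun i _ => hterm i
    _ = L * V := by field_simp

/-- Comparing the GLM empirical gradient at `Φᵀu` with the embedded gradient at `u`:
`‖∇F(Φᵀu)‖ ≤ ‖∇F̃(u)‖ + L₀ X ‖id - E ∘ Φ‖` for any linear isometry `E : ℝᵏ → ℝᵈ`. -/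
theorem stmt_12 (d k n : ℕ) (hn : 0 < n) (L₀ X : ℝ)
    (x : Fin n → EuclideanSpace ℝ (Fin d)) (hx : ∀ i, ‖x i‖ ≤ X)
    (φ : Fin n → ℝ → ℝ) (hφ : ∀ i, Differentiable ℝ (φ i))
    (hφ' : ∀ i, ∀ z : ℝ, |deriv (φ i) z| ≤ L₀)
    (Φ : EuclideanSpace ℝ (Fin d) →L[ℝ] EuclideanSpace ℝ (Fin k))
    (E : EuclideanSpace ℝ (Fin k) →ₗᵢ[ℝ] EuclideanSpace ℝ (Fin d))
    (F : EuclideanSpace ℝ (Fin d) → ℝ)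
    (hF : ∀ w, F w = (1 / (n : ℝ)) * ∑ i, φ i ⟪w, x i⟫)
    (Ft : EuclideanSpace ℝ (Fin k) → ℝ)
    (hFt : ∀ u, Ft u = (1 / (n : ℝ)) * ∑ i, φ i ⟪u, Φ (x i)⟫) :
    ∀ u : EuclideanSpace ℝ (Fin k),
      ‖gradient F ((ContinuousLinearMap.adjoint Φ) u)‖ ≤ ‖gradient Ft u‖
        + L₀ * X * ‖ContinuousLinearMap.id ℝ (EuclideanSpace ℝ (Fin d))
            - E.toContinuousLinearMap.comp Φ‖ := by
  intro u
  set w := ContinuousLinearMap.adjoint Φ u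
  set T := ContinuousLinearMap.id ℝ (EuclideanSpace ℝ (Fin d)) - E.toContinuousLinearMap.comp Φ
  have hgradF : HasGradientAt F ((1 / (n : ℝ)) • ∑ i, deriv (φ i) ⟪w, x i⟫ • x i) w := by
    simpa only [← funext hF] using
      hasGradientAt_smul_sum_comp_inner (1 / (n : ℝ)) x fun i => (hφ i).differentiableAt
  have hFt_eq : Ft = F ∘ ContinuousLinearMap.adjoint Φ := funext fun v => by
    simp only [hFt, hF, Function.comp_apply, ContinuousLinearMap.adjoint_inner_left]
  have hgradFt : gradient Ft u = Φ (gradient F w) := by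
    rw [hFt_eq, (hgradF.comp_continuousLinearMap _).gradient, ContinuousLinearMap.adjoint_adjoint,
      hgradF.gradient]
  have hgradF_le : ‖gradient F w‖ ≤ L₀ * X := by
    rw [hgradF.gradient]
    exact norm_one_div_smul_sum_smul_le hn (fun i => hφ' i _) hx
  calc ‖gradient F w‖ = ‖E (gradient Ft u) + T (gradient F w)‖ := by
        simp [T, hgradFt]
    _ ≤ ‖gradient Ft u‖ + ‖T‖ * ‖gradient F w‖ :=
        norm_add_le_of_le (E.norm_map _).le (T.le_opNorm _)
    _ ≤ ‖gradient Ft u‖ + L₀ * X * ‖T‖ := by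
        rw [mul_comm (L₀ * X)]
        gcongr
end

section
/- Let (Ω, 𝓐, μ) be a probability space with filtration (ℱ_k)_{k∈ℕ}, let g : ℝ^d → ℝ^d be a (Borel measurable) map, and let τ₁, τ₂ ≥ 0. Let w₀, ..., w_t, ∇₀, ..., ∇_t, Δ₁, ..., Δ_t : Ω → ℝ^d be square-integrable random vectors such that: (i) w₀ and ∇₀ are ℱ₀-measurable and 𝔼[‖∇₀ − g(w₀)‖²] ≤ τ₁²; (ii) for each k ∈ {1, ..., t}, w_k is ℱ_{k−1}-measurable, Δ_k is ℱ_k-measurable, the conditional expectation of Δ_k given ℱ_{k−1} equals g(w_k) − g(w_{k−1}) almost everywhere, and 𝔼[‖Δ_k − (g(w_k) − g(w_{k−1}))‖² | ℱ_{k−1}] ≤ τ₂²·‖w_k − w_{k−1}‖² almost everywhere; (iii) ∇_k = ∇_{k−1} + Δ_k for each k ∈ {1, ..., t}. Then 𝔼[‖∇_t − g(w_t)‖²] ≤ τ₂²·Σ_{k=1}^t 𝔼[‖w_k − w_{k−1}‖²] + τ₁². -/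
/-!
Write `eₖ = ∇ₖ - g(wₖ)`. Then `eₖ = eₖ₋₁ + ξₖ` with `ξₖ = Δₖ - (g(wₖ) - g(wₖ₋₁))`, where `eₖ₋₁` is
`ℱₖ₋₁`-measurable and `𝔼[ξₖ | ℱₖ₋₁] = 0`. Hence `eₖ₋₁ ⊥ ξₖ` in `L²`, so
`𝔼‖eₖ‖² = 𝔼‖eₖ₋₁‖² + 𝔼‖ξₖ‖²`, and the tower property bounds `𝔼‖ξₖ‖²` by `τ₂² 𝔼‖wₖ - wₖ₋₁‖²`.
Summing these increments over `k` gives the claim.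
-/

open MeasureTheory
open scoped InnerProductSpace

lemma le_sum_Icc_add_of_le_add {a b : ℕ → ℝ} {t : ℕ}
    (h : ∀ k, 1 ≤ k → k ≤ t → a k ≤ a (k - 1) + b k) :
    a t ≤ ∑ k ∈ Finset.Icc 1 t, b k + a 0 := by
  induction t with
  | zero => simp
  | succ n ih =>
    rw [Finset.sum_Icc_succ_top (by omega)]
    have hstep := h (n + 1) (by omega) le_rfl
    have hn := ih fun k hk1 hkn => h k hk1 (by omega)
    rw [Nat.add_sub_cancel] at hstep
    linarith

namespace MeasureTheory

variable {α : Type*} {m m0 : MeasurableSpace α} {μ : Measure α}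

lemma Filtration.stronglyMeasurable_of_eq_add {F : Type*} [NormedAddCommGroup F]
    (ℱ : Filtration ℕ m0) {x Δ : ℕ → α → F} {t : ℕ} (h0 : StronglyMeasurable[ℱ 0] (x 0))
    (hΔ : ∀ k, 1 ≤ k → k ≤ t → StronglyMeasurable[ℱ k] (Δ k))
    (hrec : ∀ k, 1 ≤ k → k ≤ t → x k = x (k - 1) + Δ k) :
    ∀ k ≤ t, StronglyMeasurable[ℱ k] (x k) := by
  intro k hk
  induction k with
  | zero => exact h0
  | succ n ih =>
    rw [hrec (n + 1) (by omega) hk]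
    exact ((ih (by omega)).mono (ℱ.mono n.le_succ)).add (hΔ (n + 1) (by omega) hk)

lemma MemLp.integrable_norm_sq {F : Type*} [NormedAddCommGroup F] {X : α → F}
    (hX : MemLp X 2 μ) : Integrable (fun ω => ‖X ω‖ ^ 2) μ :=
  (memLp_two_iff_integrable_sq_norm hX.1).1 hX

lemma condExp_sub_eq_zero_of_ae_eq_condExp {F : Type*} [NormedAddCommGroup F] [NormedSpace ℝ F]
    [CompleteSpace F] (hm : m ≤ m0) [SigmaFinite (μ.trim hm)] {f g : α → F}
    (hf : Integrable f μ) (hg : g =ᵐ[μ] μ[f|m]) : μ[f - g|m] =ᵐ[μ] 0 := by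
  have hcc : μ[g|m] =ᵐ[μ] μ[f|m] :=
    (condExp_congr_ae hg).trans (condExp_condExp_of_le le_rfl hm)
  filter_upwards [condExp_sub hf (integrable_condExp.congr hg.symm) m, hcc] with ω h1 h2
  simp [h1, h2]

lemma integral_le_integral_of_condExp_le (hm : m ≤ m0) [SigmaFinite (μ.trim hm)] {f h : α → ℝ}
    (hh : Integrable h μ) (hfh : μ[f|m] ≤ᵐ[μ] h) : ∫ ω, f ω ∂μ ≤ ∫ ω, h ω ∂μ := by
  rw [← integral_condExp hm]
  exact integral_mono_ae integrable_condExp hh hfh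

variable {E : Type*} [NormedAddCommGroup E] [InnerProductSpace ℝ E]

lemma integrable_inner_of_memLp_two {X Y : α → E} (hX : MemLp X 2 μ) (hY : MemLp Y 2 μ) :
    Integrable (fun ω => ⟪X ω, Y ω⟫_ℝ) μ :=
  memLp_one_iff_integrable.1 ((innerSL ℝ).memLp_of_bilin 1 hX hY)

variable [CompleteSpace E]

lemma integral_inner_eq_zero_of_condExp_eq_zero (hm : m ≤ m0) [SigmaFinite (μ.trim hm)]
    {X Y : α → E} (hX : StronglyMeasurable[m] X) (hXY : Integrable (fun ω => ⟪X ω, Y ω⟫_ℝ) μ)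
    (hY : Integrable Y μ) (hY0 : μ[Y|m] =ᵐ[μ] 0) :
    ∫ ω, ⟪X ω, Y ω⟫_ℝ ∂μ = 0 := by
  have hpull : μ[fun ω => ⟪X ω, Y ω⟫_ℝ|m] =ᵐ[μ] fun ω => ⟪X ω, μ[Y|m] ω⟫_ℝ :=
    condExp_bilin_of_stronglyMeasurable_left (innerSL ℝ) hX hXY hY
  rw [← integral_condExp hm, integral_congr_ae hpull]
  refine integral_eq_zero_of_ae ?_
  filter_upwards [hY0] with ω hω
  simp [hω]

lemma integral_norm_add_sq_of_condExp_eq_zero (hm : m ≤ m0) [IsFiniteMeasure μ]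
    {X Y : α → E} (hXm : StronglyMeasurable[m] X) (hX : MemLp X 2 μ) (hY : MemLp Y 2 μ)
    (hY0 : μ[Y|m] =ᵐ[μ] 0) :
    ∫ ω, ‖X ω + Y ω‖ ^ 2 ∂μ = ∫ ω, ‖X ω‖ ^ 2 ∂μ + ∫ ω, ‖Y ω‖ ^ 2 ∂μ := by
  have hXY := integrable_inner_of_memLp_two hX hY
  have hX2 := hX.integrable_norm_sq
  have hcross : Integrable (fun ω => ‖X ω‖ ^ 2 + 2 * ⟪X ω, Y ω⟫_ℝ) μ :=
    hX2.add (hXY.const_mul 2)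
  simp_rw [norm_add_sq_real]
  rw [integral_add hcross hY.integrable_norm_sq, integral_add hX2 (hXY.const_mul 2),
    integral_const_mul,
    integral_inner_eq_zero_of_condExp_eq_zero hm hXm hXY (hY.integrable one_le_two) hY0]
  ring

/- No `L²` assumption on `X` is needed: if `X ∉ L²` then `X + Y ∉ L²`, and the left-hand
Bochner integral takes the junk value `0`. -/
lemma integral_norm_add_sq_le_of_condExp_eq_zero (hm : m ≤ m0) [IsFiniteMeasure μ]
    {X Y : α → E} (hXm : StronglyMeasurable[m] X) (hY : MemLp Y 2 μ) (hY0 : μ[Y|m] =ᵐ[μ] 0) :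
    ∫ ω, ‖X ω + Y ω‖ ^ 2 ∂μ ≤ ∫ ω, ‖X ω‖ ^ 2 ∂μ + ∫ ω, ‖Y ω‖ ^ 2 ∂μ := by
  by_cases hX : MemLp X 2 μ
  · exact (integral_norm_add_sq_of_condExp_eq_zero hm hXm hX hY hY0).le
  have hXY : ¬ MemLp (X + Y) 2 μ := fun h => hX (by simpa using h.sub hY)
  rw [memLp_two_iff_integrable_sq_norm ((hXm.mono hm).aestronglyMeasurable.add hY.1)] at hXY
  rw [show (fun ω => ‖X ω + Y ω‖ ^ 2) = fun ω => ‖(X + Y) ω‖ ^ 2 from rfl, integral_undef hXY]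
  positivity

lemma integral_norm_add_sub_condExp_sq_le (hm : m ≤ m0) [IsFiniteMeasure μ]
    {X D G : α → E} {V : α → ℝ} (hXm : StronglyMeasurable[m] X) (hD : MemLp D 2 μ)
    (hG : G =ᵐ[μ] μ[D|m]) (hV : Integrable V μ)
    (hvar : μ[fun ω => ‖D ω - G ω‖ ^ 2|m] ≤ᵐ[μ] V) :
    ∫ ω, ‖X ω + (D ω - G ω)‖ ^ 2 ∂μ ≤ ∫ ω, ‖X ω‖ ^ 2 ∂μ + ∫ ω, V ω ∂μ := by
  have hY : MemLp (D - G) 2 μ := hD.sub ((hD.condExp one_le_two).ae_eq hG.symm)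
  have hY0 : μ[D - G|m] =ᵐ[μ] 0 :=
    condExp_sub_eq_zero_of_ae_eq_condExp hm (hD.integrable one_le_two) hG
  calc ∫ ω, ‖X ω + (D ω - G ω)‖ ^ 2 ∂μ ≤ ∫ ω, ‖X ω‖ ^ 2 ∂μ + ∫ ω, ‖D ω - G ω‖ ^ 2 ∂μ :=
        integral_norm_add_sq_le_of_condExp_eq_zero hm hXm hY hY0
    _ ≤ ∫ ω, ‖X ω‖ ^ 2 ∂μ + ∫ ω, V ω ∂μ := by
        linarith [integral_le_integral_of_condExp_le hm hV hvar]

end MeasureTheory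

theorem stmt_15_general {Ω : Type*} {mΩ : MeasurableSpace Ω} (μ : Measure Ω)
    [IsProbabilityMeasure μ] (ℱ : Filtration ℕ mΩ)
    (d : ℕ) (g : EuclideanSpace ℝ (Fin d) → EuclideanSpace ℝ (Fin d))
    (hg : Measurable g) (τ₁ τ₂ : ℝ)
    (t : ℕ) (w grad Δ : ℕ → Ω → EuclideanSpace ℝ (Fin d))
    (hL2w : ∀ k ≤ t, MemLp (w k) 2 μ)
    (hL2Δ : ∀ k, 1 ≤ k → k ≤ t → MemLp (Δ k) 2 μ)
    (hw0 : StronglyMeasurable[ℱ 0] (w 0))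
    (hgrad0 : StronglyMeasurable[ℱ 0] (grad 0))
    (hinit : ∫ ω, ‖grad 0 ω - g (w 0 ω)‖ ^ 2 ∂μ ≤ τ₁ ^ 2)
    (hwmeas : ∀ k, 1 ≤ k → k ≤ t → StronglyMeasurable[ℱ (k - 1)] (w k))
    (hΔmeas : ∀ k, 1 ≤ k → k ≤ t → StronglyMeasurable[ℱ k] (Δ k))
    (hΔmean : ∀ k, 1 ≤ k → k ≤ t →
      μ[Δ k | ℱ (k - 1)] =ᵐ[μ] fun ω => g (w k ω) - g (w (k - 1) ω))
    (hΔvar : ∀ k, 1 ≤ k → k ≤ t →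
      ∀ᵐ ω ∂μ,
        (μ[(fun ω' => ‖Δ k ω' - (g (w k ω') - g (w (k - 1) ω'))‖ ^ 2) | ℱ (k - 1)]) ω
          ≤ τ₂ ^ 2 * ‖w k ω - w (k - 1) ω‖ ^ 2)
    (hrec : ∀ k, 1 ≤ k → k ≤ t → grad k = grad (k - 1) + Δ k) :
    ∫ ω, ‖grad t ω - g (w t ω)‖ ^ 2 ∂μ
      ≤ τ₂ ^ 2 * ∑ k ∈ Finset.Icc 1 t, ∫ ω, ‖w k ω - w (k - 1) ω‖ ^ 2 ∂μ + τ₁ ^ 2 := by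
  have hgrad := ℱ.stronglyMeasurable_of_eq_add hgrad0 hΔmeas hrec
  have hgw : ∀ k ≤ t, StronglyMeasurable[ℱ k] (fun ω => g (w k ω)) := by
    intro k hk
    rcases Nat.eq_zero_or_pos k with rfl | hk1
    · exact (hg.comp hw0.measurable).stronglyMeasurable
    · exact (hg.comp (hwmeas k hk1 hk).measurable).stronglyMeasurable.mono (ℱ.mono (k.sub_le 1))
  have step : ∀ k, 1 ≤ k → k ≤ t → ∫ ω, ‖grad k ω - g (w k ω)‖ ^ 2 ∂μ ≤
      ∫ ω, ‖grad (k - 1) ω - g (w (k - 1) ω)‖ ^ 2 ∂μ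
        + τ₂ ^ 2 * ∫ ω, ‖w k ω - w (k - 1) ω‖ ^ 2 ∂μ := by
    intro k hk1 hkt
    have hdw : MemLp (fun ω => w k ω - w (k - 1) ω) 2 μ := (hL2w k hkt).sub (hL2w _ (by omega))
    calc ∫ ω, ‖grad k ω - g (w k ω)‖ ^ 2 ∂μ
        = ∫ ω, ‖(grad (k - 1) ω - g (w (k - 1) ω))
            + (Δ k ω - (g (w k ω) - g (w (k - 1) ω)))‖ ^ 2 ∂μ := by
          rw [hrec k hk1 hkt]
          congr! 3 with ω
          rw [Pi.add_apply]
          congr 1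
          abel
      _ ≤ _ := by
          rw [← integral_const_mul]
          exact integral_norm_add_sub_condExp_sq_le (ℱ.le _)
            ((hgrad _ (by omega)).sub (hgw _ (by omega))) (hL2Δ k hk1 hkt)
            (hΔmean k hk1 hkt).symm (hdw.integrable_norm_sq.const_mul _) (hΔvar k hk1 hkt)
  calc _ ≤ ∑ k ∈ Finset.Icc 1 t, τ₂ ^ 2 * ∫ ω, ‖w k ω - w (k - 1) ω‖ ^ 2 ∂μ
        + ∫ ω, ‖grad 0 ω - g (w 0 ω)‖ ^ 2 ∂μ := le_sum_Icc_add_of_le_add step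
    _ ≤ _ := by rw [← Finset.mul_sum]; linarith

/-- Error accumulation of recursive variance-reduced gradient estimates (SPIDER-type):
if `∇ₖ = ∇ₖ₋₁ + Δₖ` where `Δₖ` is a conditionally unbiased estimate of the gradient variation
`g(wₖ) - g(wₖ₋₁)` with conditional variance at most `τ₂²‖wₖ - wₖ₋₁‖²`, and the initial estimate
has mean-squared error at most `τ₁²`, then
`𝔼‖∇ₜ - g(wₜ)‖² ≤ τ₂² Σₖ 𝔼‖wₖ - wₖ₋₁‖² + τ₁²`. -/
theorem stmt_15 {Ω : Type*} {mΩ : MeasurableSpace Ω} (μ : Measure Ω)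
    [IsProbabilityMeasure μ] (ℱ : Filtration ℕ mΩ)
    (d : ℕ) (g : EuclideanSpace ℝ (Fin d) → EuclideanSpace ℝ (Fin d))
    (hg : Measurable g) (τ₁ τ₂ : ℝ) (hτ₁ : 0 ≤ τ₁) (hτ₂ : 0 ≤ τ₂)
    (t : ℕ) (w grad Δ : ℕ → Ω → EuclideanSpace ℝ (Fin d))
    (hL2w : ∀ k ≤ t, MemLp (w k) 2 μ)
    (hL2grad : ∀ k ≤ t, MemLp (grad k) 2 μ)
    (hL2Δ : ∀ k, 1 ≤ k → k ≤ t → MemLp (Δ k) 2 μ)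
    (hw0 : StronglyMeasurable[ℱ 0] (w 0))
    (hgrad0 : StronglyMeasurable[ℱ 0] (grad 0))
    (hinit : ∫ ω, ‖grad 0 ω - g (w 0 ω)‖ ^ 2 ∂μ ≤ τ₁ ^ 2)
    (hwmeas : ∀ k, 1 ≤ k → k ≤ t → StronglyMeasurable[ℱ (k - 1)] (w k))
    (hΔmeas : ∀ k, 1 ≤ k → k ≤ t → StronglyMeasurable[ℱ k] (Δ k))
    (hΔmean : ∀ k, 1 ≤ k → k ≤ t →
      μ[Δ k | ℱ (k - 1)] =ᵐ[μ] fun ω => g (w k ω) - g (w (k - 1) ω))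
    (hΔvar : ∀ k, 1 ≤ k → k ≤ t →
      ∀ᵐ ω ∂μ,
        (μ[(fun ω' => ‖Δ k ω' - (g (w k ω') - g (w (k - 1) ω'))‖ ^ 2) | ℱ (k - 1)]) ω
          ≤ τ₂ ^ 2 * ‖w k ω - w (k - 1) ω‖ ^ 2)
    (hrec : ∀ k, 1 ≤ k → k ≤ t → grad k = grad (k - 1) + Δ k) :
    ∫ ω, ‖grad t ω - g (w t ω)‖ ^ 2 ∂μ
      ≤ τ₂ ^ 2 * ∑ k ∈ Finset.Icc 1 t, ∫ ω, ‖w k ω - w (k - 1) ω‖ ^ 2 ∂μ + τ₁ ^ 2 :=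
  stmt_15_general μ ℱ d g hg τ₁ τ₂ t w grad Δ hL2w hL2Δ hw0 hgrad0 hinit hwmeas hΔmeas hΔmean hΔvar
    hrec
end

section
/- Let L₀, β > 0 and define Δ : ℝ → ℝ by Δ(w) = w² if |w| ≤ L₀/(2β), and Δ(w) = (L₀/β)·|w| − L₀²/(4β²) otherwise. For x ∈ {−1, 1} define ℓ(w; x) = (L₀/2)·w·x + (β/2)·Δ(w). Then for each x ∈ {−1, 1}, the function w ↦ ℓ(w; x) is convex, L₀-Lipschitz, and differentiable on ℝ with β-Lipschitz derivative. -/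
/-!
Write `r = L₀ / (2β)` and `c(w)` for the projection of `w` onto `[-r, r]`. Then
`Δ(w) = c(w) (2w - c(w))`, and the projection inequality `(y - c(w)) (w - c(w)) ≤ 0` for
`y ∈ [-r, r]` traps `Δ(v) - Δ(w) - 2c(w)(v - w)` between `0` and `(v - w)²`, so `Δ' = 2c`.
Hence `∂ℓ/∂w = (L₀/2) x + β c(w)`: it is monotone (convexity), bounded by `L₀/2 + βr = L₀`
(the Lipschitz bound), and `β`-Lipschitz since `c` is `1`-Lipschitz.
-/

open Set Asymptotics

theorem hasDerivAt_of_norm_sub_sub_le_sq {𝕜 F : Type*} [NontriviallyNormedField 𝕜]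
    [NormedAddCommGroup F] [NormedSpace 𝕜 F] {f : 𝕜 → F} {f' : F} {x : 𝕜} (C : ℝ)
    (h : ∀ y, ‖f y - f x - (y - x) • f'‖ ≤ C * ‖y - x‖ ^ 2) : HasDerivAt f f' x :=
  .of_isLittleO <| (IsBigO.of_bound C (.of_forall fun y => by
    simpa [abs_of_nonneg (norm_nonneg _)] using h y)).trans_isLittleO
      (isLittleO_pow_sub_sub x one_lt_two)

noncomputable def clamp (r w : ℝ) : ℝ := max (-r) (min r w)

noncomputable def huber (r w : ℝ) : ℝ := if |w| ≤ r then w ^ 2 else 2 * r * |w| - r ^ 2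

section
variable {r : ℝ}

theorem clamp_mem_Icc (hr : 0 ≤ r) (w : ℝ) : clamp r w ∈ Icc (-r) r :=
  ⟨le_max_left _ _, max_le (by linarith) (min_le_left _ _)⟩

theorem monotone_clamp : Monotone (clamp r) := fun _ _ h =>
  max_le_max le_rfl (min_le_min le_rfl h)

theorem lipschitzWith_clamp : LipschitzWith 1 (clamp r) :=
  (LipschitzWith.id.const_min r).const_max (-r)

/-- The variational inequality characterising `clamp r w` as the projection of `w` onto
`[-r, r]`. -/
theorem sub_clamp_mul_sub_clamp_nonpos {y : ℝ} (hy : y ∈ Icc (-r) r) (w : ℝ) :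
    (y - clamp r w) * (w - clamp r w) ≤ 0 := by
  obtain ⟨hy₁, hy₂⟩ := hy
  have : -r ≤ r := hy₁.trans hy₂
  unfold clamp
  rcases le_total w r with h₁ | h₁ <;> rcases le_total w (-r) with h₂ | h₂ <;>
    simp only [min_eq_left, min_eq_right, max_eq_left, max_eq_right, *] <;> nlinarith

theorem huber_eq_clamp_mul (hr : 0 ≤ r) (w : ℝ) :
    huber r w = clamp r w * (2 * w - clamp r w) := by
  unfold huber clamp
  split_ifs with h
  · rw [abs_le] at h
    rw [min_eq_right h.2, max_eq_right h.1]
    ring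
  · rcases le_total w 0 with hw | hw
    · rw [abs_of_nonpos hw] at h ⊢
      rw [min_eq_right (by linarith), max_eq_left (by linarith)]
      ring
    · rw [abs_of_nonneg hw] at h ⊢
      rw [min_eq_left (by linarith), max_eq_right (by linarith)]
      ring

/-- The remainder equals `(c v - c w) * (2 * v - c v - c w)` with `c = clamp r`, and both bounds
are the projection inequality applied at `v` and at `w`. -/
theorem huber_sub_sub_mem_Icc (hr : 0 ≤ r) (v w : ℝ) :
    huber r v - huber r w - 2 * clamp r w * (v - w) ∈ Icc 0 ((v - w) ^ 2) := by
  have hv := sub_clamp_mul_sub_clamp_nonpos (clamp_mem_Icc hr w) v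
  have hw := sub_clamp_mul_sub_clamp_nonpos (clamp_mem_Icc hr v) w
  rw [huber_eq_clamp_mul hr, huber_eq_clamp_mul hr]
  constructor
  · nlinarith [sq_nonneg (clamp r v - clamp r w)]
  · nlinarith [sq_nonneg (v - clamp r v - (w - clamp r w))]

theorem hasDerivAt_huber (hr : 0 ≤ r) (w : ℝ) : HasDerivAt (huber r) (2 * clamp r w) w := by
  refine hasDerivAt_of_norm_sub_sub_le_sq 1 fun v => ?_
  obtain ⟨h₀, h₁⟩ := huber_sub_sub_mem_Icc hr v w
  rw [Real.norm_eq_abs, Real.norm_eq_abs, sq_abs, smul_eq_mul, mul_comm (v - w), abs_le]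
  constructor <;> linarith

theorem hasDerivAt_linear_add_huber (a b : ℝ) (hr : 0 ≤ r) (w : ℝ) :
    HasDerivAt (fun w => a * w + b / 2 * huber r w) (a + b * clamp r w) w :=
  (((hasDerivAt_id' w).const_mul a).add ((hasDerivAt_huber hr w).const_mul (b / 2))).congr_deriv
    (by ring)

theorem deriv_linear_add_huber (a b : ℝ) (hr : 0 ≤ r) :
    deriv (fun w => a * w + b / 2 * huber r w) = fun w => a + b * clamp r w :=
  funext fun w => (hasDerivAt_linear_add_huber a b hr w).deriv

theorem differentiable_linear_add_huber (a b : ℝ) (hr : 0 ≤ r) :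
    Differentiable ℝ fun w => a * w + b / 2 * huber r w :=
  fun w => (hasDerivAt_linear_add_huber a b hr w).differentiableAt

theorem convexOn_linear_add_huber (a : ℝ) {b : ℝ} (hb : 0 ≤ b) (hr : 0 ≤ r) :
    ConvexOn ℝ univ fun w => a * w + b / 2 * huber r w := by
  refine Monotone.convexOn_univ_of_deriv (differentiable_linear_add_huber a b hr) ?_
  rw [deriv_linear_add_huber a b hr]
  intro v w hvw
  dsimp only
  gcongr
  exact monotone_clamp hvw

theorem lipschitzWith_linear_add_huber {a b K : ℝ} (hb : 0 ≤ b) (hr : 0 ≤ r)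
    (hK : |a| + b * r ≤ K) : LipschitzWith K.toNNReal fun w => a * w + b / 2 * huber r w := by
  refine lipschitzWith_of_nnnorm_deriv_le (differentiable_linear_add_huber a b hr) fun w => ?_
  rw [deriv_linear_add_huber a b hr, ← NNReal.coe_le_coe, coe_nnnorm, Real.norm_eq_abs,
    Real.coe_toNNReal _ ((add_nonneg (abs_nonneg a) (mul_nonneg hb hr)).trans hK)]
  calc |a + b * clamp r w| ≤ |a| + |b * clamp r w| := abs_add_le _ _
    _ = |a| + b * |clamp r w| := by rw [abs_mul, abs_of_nonneg hb]
    _ ≤ |a| + b * r := by gcongr; exact abs_le.mpr (clamp_mem_Icc hr w)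
    _ ≤ K := hK

theorem lipschitzWith_deriv_linear_add_huber (a : ℝ) {b : ℝ} (hb : 0 ≤ b) (hr : 0 ≤ r) :
    LipschitzWith b.toNNReal (deriv fun w => a * w + b / 2 * huber r w) := by
  rw [deriv_linear_add_huber a b hr]
  refine .of_dist_le_mul fun v w => ?_
  rw [Real.dist_eq, Real.dist_eq, Real.coe_toNNReal _ hb, add_sub_add_left_eq_sub, ← mul_sub,
    abs_mul, abs_of_nonneg hb]
  refine mul_le_mul_of_nonneg_left ?_ hb
  simpa [Real.dist_eq] using (lipschitzWith_clamp (r := r)).dist_le_mul v w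

end

/-- The one-dimensional hard-instance loss `ℓ(w; x) = (L₀/2) w x + (β/2) Δ(w)`, with `Δ` the
Huber regularizer, is convex, `L₀`-Lipschitz, and differentiable with `β`-Lipschitz derivative
for each `x ∈ {-1, 1}`. -/
theorem stmt_16 (L₀ β : ℝ) (hL₀ : 0 < L₀) (hβ : 0 < β)
    (Δ : ℝ → ℝ)
    (hΔ : ∀ w, Δ w =
      if |w| ≤ L₀ / (2 * β) then w ^ 2 else (L₀ / β) * |w| - L₀ ^ 2 / (4 * β ^ 2))
    (ℓ : ℝ → ℝ → ℝ)
    (hℓ : ∀ w x, ℓ w x = L₀ / 2 * w * x + β / 2 * Δ w) :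
    ∀ x ∈ ({-1, 1} : Set ℝ),
      ConvexOn ℝ Set.univ (fun w => ℓ w x) ∧
      LipschitzWith L₀.toNNReal (fun w => ℓ w x) ∧
      Differentiable ℝ (fun w => ℓ w x) ∧
      LipschitzWith β.toNNReal (deriv (fun w => ℓ w x)) := by
  intro x hx
  set r := L₀ / (2 * β) with hr_def
  have hr : 0 ≤ r := by positivity
  have hΔ_huber (w : ℝ) : Δ w = huber r w := by
    rw [hΔ, huber, hr_def]
    congr 1
    field_simp
    ring
  have hℓ_huber : (fun w => ℓ w x) = fun w => L₀ / 2 * x * w + β / 2 * huber r w := by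
    ext w
    rw [hℓ, hΔ_huber]
    ring
  have hK : |L₀ / 2 * x| + β * r ≤ L₀ := by
    have hx_abs : |x| = 1 := by rcases hx with rfl | rfl <;> simp
    rw [abs_mul, hx_abs, abs_of_pos (half_pos hL₀), hr_def]
    field_simp
    linarith
  rw [hℓ_huber]
  exact ⟨convexOn_linear_add_huber _ hβ.le hr, lipschitzWith_linear_add_huber hβ.le hr hK,
    differentiable_linear_add_huber _ _ hr, lipschitzWith_deriv_linear_add_huber _ hβ.le hr⟩
end
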